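/- If T is a nonempty rooted tree, then the simplicial set X^T is not a 1-Segal set; specifically, the Segal map (d_0, d_2) : X^T_2 → X^T_1 × X^T_1 is not surjective, since the pair (T, T) is not in its image. -/

import Mathlib

/-- A finite rooted tree, encoded as a finite partial order with a least element
(the root) in which the set of elements below any given vertex is totally
ordered.  Edges of the tree are the covering pairs of the order. -/
structure CutTree where
  V : Type
  [fintypeV : Fintype V]
  [decEq : DecidableEq V]
  [po : PartialOrder V]
  root : V
  root_le : ∀ v : V, root ≤ v
  lower_total : ∀ v a b : V, a ≤ v → b ≤ v → a ≤ b ∨ b ≤ a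

attribute [instance] CutTree.fintypeV CutTree.decEq CutTree.po

namespace CutTree

variable (T : CutTree)

/-- A subset of the vertices defines a lower subtree when it is downward closed. -/
def IsLower (L : Set T.V) : Prop := ∀ ⦃a b : T.V⦄, a ≤ b → b ∈ L → a ∈ L

/-- `L` defines a lower subforest of the admissible subforest with vertex set `H`. -/
def IsLowerIn (H L : Set T.V) : Prop :=
  L ⊆ H ∧ ∀ ⦃a b : T.V⦄, a ∈ H → b ∈ L → a ≤ b → a ∈ L

/-- `H` is the vertex set of an admissible subforest: a difference of two nested
downward closed sets. -/
def IsAdmissible (H : Set T.V) : Prop :=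
  ∃ A B : Set T.V, T.IsLower A ∧ T.IsLower B ∧ B ⊆ A ∧ H = A \ B

theorem isLower_empty : T.IsLower (∅ : Set T.V) := fun _ _ _ h => h.elim

theorem isAdmissible_empty : T.IsAdmissible (∅ : Set T.V) :=
  ⟨∅, ∅, T.isLower_empty, T.isLower_empty, le_rfl, by simp⟩

/-- An `n`-simplex of the 2-Segal set `X^T`: an admissible subforest `H = L 0`
together with a layering of cuts `H = L 0 ⊇ L 1 ⊇ ⋯ ⊇ L n = ∅` by lower
subforests of `H`. -/
@[ext]
structure Simplex (T : CutTree) (n : ℕ) where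
  L : Fin (n + 1) → Set T.V
  admissible : T.IsAdmissible (L 0)
  antitone : Antitone L
  lowerIn : ∀ i, T.IsLowerIn (L 0) (L i)
  last_eq : L (Fin.last n) = ∅

theorem isAdmissible_diff {H P Q : Set T.V} (hH : T.IsAdmissible H)
    (hP : T.IsLowerIn H P) (hQ : T.IsLowerIn H Q) (hQP : Q ⊆ P) :
    T.IsAdmissible (P \ Q) := by
  obtain ⟨A, B, hA, hB, hBA, rfl⟩ := hH
  have hlow : ∀ R : Set T.V, T.IsLowerIn (A \ B) R → T.IsLower (R ∪ B) := by
    rintro R ⟨hRsub, hRcl⟩ a b hab hb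
    rcases hb with hb | hb
    · have hbA : b ∈ A := (hRsub hb).1
      have haA : a ∈ A := hA hab hbA
      by_cases haB : a ∈ B
      · exact Or.inr haB
      · exact Or.inl (hRcl ⟨haA, haB⟩ hb hab)
    · exact Or.inr (hB hab hb)
  refine ⟨P ∪ B, Q ∪ B, hlow P hP, hlow Q hQ, Set.union_subset_union_left _ hQP, ?_⟩
  ext x
  constructor
  · rintro ⟨hxP, hxQ⟩
    have hxB : x ∉ B := (hP.1 hxP).2
    exact ⟨Or.inl hxP, by rintro (h | h) <;> [exact hxQ h; exact hxB h]⟩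
  · rintro ⟨hx1, hx2⟩
    rcases hx1 with hx1 | hx1
    · exact ⟨hx1, fun h => hx2 (Or.inl h)⟩
    · exact absurd (Or.inr hx1) hx2

/-- The action of a simplicial operator `α : [m] → [n]` on `X^T`. -/
def act {m n : ℕ} (α : Fin (m + 1) → Fin (n + 1)) (hα : Monotone α)
    (σ : T.Simplex n) : T.Simplex m where
  L j := σ.L (α j) \ σ.L (α (Fin.last m))
  admissible := by
    refine T.isAdmissible_diff σ.admissible (σ.lowerIn _) (σ.lowerIn _) ?_
    exact σ.antitone (hα (Fin.le_last _))
  antitone := by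
    intro j k hjk
    exact Set.diff_subset_diff_left (σ.antitone (hα hjk))
  lowerIn := by
    intro i
    constructor
    · exact Set.diff_subset_diff_left (σ.antitone (hα (Fin.zero_le _)))
    · rintro a b ⟨haL, haS⟩ ⟨hbL, _⟩ hab
      have ha0 : a ∈ σ.L 0 := (σ.lowerIn (α 0)).1 haL
      exact ⟨(σ.lowerIn (α i)).2 ha0 hbL hab, haS⟩
  last_eq := Set.diff_self

/-- The `i`-th face map `X^T_{n+1} → X^T_n`. -/
def face {n : ℕ} (i : Fin (n + 2)) : T.Simplex (n + 1) → T.Simplex n :=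
  T.act i.succAbove (Fin.strictMono_succAbove i).monotone

/-- The `i`-th degeneracy map `X^T_n → X^T_{n+1}`. -/
def degen {n : ℕ} (i : Fin (n + 1)) : T.Simplex n → T.Simplex (n + 1) :=
  T.act i.predAbove (Fin.predAbove_right_monotone i)

end CutTree

namespace CutTree

variable (T : CutTree)

/-- The element of `X^T_1` given by a lower subtree `L` of `T` (the layering
`L ⊇ ∅` with no cuts). -/
def lowerOne (L : Set T.V) (h : T.IsLower L) : T.Simplex 1 where
  L := fun j => if j = 0 then L else ∅
  admissible := by
    refine ⟨L, ∅, h, T.isLower_empty, Set.empty_subset _, ?_⟩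
    simp
  antitone := by
    intro j k hjk
    by_cases hk : k = 0
    · have hj : j = 0 := le_antisymm (hk ▸ hjk) (Fin.zero_le _)
      simp [hk, hj]
    · simp [hk]
  lowerIn := by
    intro i
    by_cases hi : i = 0
    · subst hi
      simp only [if_pos rfl]
      exact ⟨le_rfl, fun a b _ hb hab => h hab hb⟩
    · simp only [if_neg hi]
      exact ⟨Set.empty_subset _, fun a b _ hb _ => hb.elim⟩
  last_eq := by
    have : (Fin.last 1) ≠ 0 := by decide
    simp [this]

/-- The element of `X^T_1` given by the whole tree `T`. -/
def whole : T.Simplex 1 := T.lowerOne Set.univ (fun _ _ _ _ => trivial)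

end CutTree

namespace CutTree

variable (T : CutTree)

@[simp]
theorem whole_L_zero : T.whole.L 0 = Set.univ := rfl

theorem disjoint_face_zero_face_two (σ : T.Simplex 2) :
    Disjoint ((T.face 0 σ).L 0) ((T.face 2 σ).L 0) := by
  have lower_sub : (T.face 0 σ).L 0 ⊆ σ.L 1 := fun _ hx => hx.1
  have upper_eq : (T.face 2 σ).L 0 = σ.L 0 \ σ.L 1 := rfl
  rw [upper_eq]
  exact Set.disjoint_sdiff_right.mono_left lower_sub

theorem not_face_zero_eq_whole_and_face_two_eq_whole (σ : T.Simplex 2) :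
    ¬ (T.face 0 σ = T.whole ∧ T.face 2 σ = T.whole) := by
  rintro ⟨h0, h2⟩
  have h := T.disjoint_face_zero_face_two σ
  rw [h0, h2, whole_L_zero, Set.disjoint_univ] at h
  exact Set.eq_empty_iff_forall_notMem.mp h T.root (Set.mem_univ _)

end CutTree

/-- For a nonempty rooted tree `T` (every `CutTree` has a root,
hence is nonempty), the simplicial set `X^T` is not 1-Segal: the Segal map
`(d_0, d_2) : X^T_2 → X^T_1 × X^T_1` is not surjective, since the pair `(T, T)`
is not in its image. -/
theorem segalMap_not_surjective (T : CutTree) :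
    (∀ σ : T.Simplex 2, ¬ (T.face 0 σ = T.whole ∧ T.face 2 σ = T.whole)) ∧
    ¬ Function.Surjective (fun σ : T.Simplex 2 => (T.face 0 σ, T.face 2 σ)) := by
  refine ⟨T.not_face_zero_eq_whole_and_face_two_eq_whole, fun hsurj => ?_⟩
  obtain ⟨σ, hσ⟩ := hsurj (T.whole, T.whole)
  exact T.not_face_zero_eq_whole_and_face_two_eq_whole σ (Prod.ext_iff.mp hσ)
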